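/- Let α ∈ (1,2] and let λ > 0 and ν > 0 be real numbers. Set B̃(α) = B(α,α) − 2^{1−2α}. With ρ = λν·(2α)^{−α}·B̃(α)/Γ(α+1) and c = (2α)^{α}/(λ·B̃(α)), the sequence (b_k)_{k≥1} satisfies b_k ≥ c·ρ^{k}·k^{α−1} for every integer k ≥ 1. -/
import Mathlib

open MeasureTheory Finset

/-- The Euler Beta function `B(a,b) = ∫₀¹ u^(a-1) (1-u)^(b-1) du`. -/
noncomputable def Beta (a b : ℝ) : ℝ :=
  ∫ u in Set.Ioo (0:ℝ) 1, u ^ (a - 1) * (1 - u) ^ (b - 1)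

/-- The sequence `(b_k)` of odd-index coefficients of the fractional power series solving
the fractional Riccati equation with `μ = 0`. -/
def IsOddRiccatiSeq (α : ℝ) (l n : ℝ) (b : ℕ → ℝ) : Prop :=
  b 1 = n / Real.Gamma (α + 1) ∧
  ∀ k : ℕ, 1 ≤ k →
    b (k + 1) = l * (Real.Gamma (2 * α * (k:ℝ) + 1) / Real.Gamma ((2 * (k:ℝ) + 1) * α + 1)) *
      ∑ j ∈ Finset.Icc 1 k, b j * b (k + 1 - j)


lemma gamma_interp {α x : ℝ} (hα : 1 ≤ α) (hα2 : α ≤ 2) (hx : 0 < x) :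
    Real.Gamma (x + α) ≤ Real.Gamma (x + 1) * (x + 1) ^ (α - 1) := by
  have h1 : (0:ℝ) < x + 1 := by linarith
  have h2 : (0:ℝ) < x + 2 := by linarith
  have hG1 : 0 < Real.Gamma (x + 1) := Real.Gamma_pos_of_pos h1
  have hG2 : 0 < Real.Gamma (x + 2) := Real.Gamma_pos_of_pos h2
  have hconv := Real.convexOn_log_Gamma.2 (Set.mem_Ioi.2 h1) (Set.mem_Ioi.2 h2)
    (by linarith : (0:ℝ) ≤ 2 - α) (by linarith : (0:ℝ) ≤ α - 1) (by ring)
  have key : (2 - α) • (x + 1) + (α - 1) • (x + 2) = x + α := by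
    simp only [smul_eq_mul]; ring
  rw [key] at hconv
  simp only [Function.comp_apply, smul_eq_mul] at hconv
  have hGα : 0 < Real.Gamma (x + α) := Real.Gamma_pos_of_pos (by linarith)
  have := Real.exp_le_exp.2 hconv
  rw [Real.exp_log hGα, Real.exp_add] at this
  calc Real.Gamma (x + α) ≤ Real.exp ((2 - α) * Real.log (Real.Gamma (x+1))) *
        Real.exp ((α - 1) * Real.log (Real.Gamma (x+2))) := this
    _ = Real.Gamma (x+1) ^ (2 - α) * Real.Gamma (x+2) ^ (α - 1) := by
        rw [Real.rpow_def_of_pos hG1, Real.rpow_def_of_pos hG2, mul_comm (Real.log _),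
          mul_comm (Real.log _)]
    _ = Real.Gamma (x+1) ^ (2 - α) * ((x+1) * Real.Gamma (x+1)) ^ (α - 1) := by
        congr 1
        congr 1
        have : x + 2 = (x + 1) + 1 := by ring
        rw [this, Real.Gamma_add_one (ne_of_gt h1)]
    _ = Real.Gamma (x+1) * (x+1) ^ (α - 1) := by
        rw [Real.mul_rpow (le_of_lt h1) (le_of_lt hG1), ← mul_assoc,
          mul_comm (Real.Gamma (x+1) ^ (2-α)), mul_assoc, ← Real.rpow_add hG1]
        have : (2 - α) + (α - 1) = 1 := by ring
        rw [this, Real.rpow_one]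
        ring

lemma gamma_ratio {α : ℝ} (hα : 1 ≤ α) (hα2 : α ≤ 2) (k : ℕ) (hk : 1 ≤ k) :
    (2*α*((k:ℝ)+1)) ^ (-α) ≤
      Real.Gamma (2*α*(k:ℝ) + 1) / Real.Gamma ((2*(k:ℝ)+1)*α + 1) := by
  set x : ℝ := 2*α*(k:ℝ) with hxdef
  have hk1 : (1:ℝ) ≤ (k:ℝ) := by exact_mod_cast hk
  have hx : 0 < x := by
    have : (0:ℝ) < (k:ℝ) := by linarith
    have : (0:ℝ) < α := by linarith
    positivity
  have hx1 : (0:ℝ) < x + 1 := by linarith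
  have hxa : (0:ℝ) < x + α := by linarith
  have hx2a : (0:ℝ) < x + 2*α := by linarith
  have hG1 : 0 < Real.Gamma (x + 1) := Real.Gamma_pos_of_pos hx1
  have harg : (2*(k:ℝ)+1)*α + 1 = (x + α) + 1 := by rw [hxdef]; ring
  rw [harg, Real.Gamma_add_one (ne_of_gt hxa)]
  have hGxa : 0 < Real.Gamma (x + α) := Real.Gamma_pos_of_pos hxa
  have hD : 0 < (x + α) * Real.Gamma (x + α) := by positivity
  rw [le_div_iff₀ hD]
  have hmain : (x + α) * Real.Gamma (x + α) ≤ (x + 2*α) ^ α * Real.Gamma (x + 1) := by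
    have h1 := gamma_interp hα hα2 hx
    have h2 : (x + α) * (Real.Gamma (x+1) * (x+1)^(α-1)) ≤ (x+2*α)^α * Real.Gamma (x+1) := by
      have hpow : (x+1)^(α-1) ≤ (x+2*α)^(α-1) :=
        Real.rpow_le_rpow (le_of_lt hx1) (by linarith) (by linarith)
      have : (x + α) * (x+1)^(α-1) ≤ (x+2*α) * (x+2*α)^(α-1) := by
        apply mul_le_mul (by linarith) hpow (Real.rpow_nonneg (le_of_lt hx1) _) (by linarith)
      calc (x + α) * (Real.Gamma (x+1) * (x+1)^(α-1))
          = ((x + α) * (x+1)^(α-1)) * Real.Gamma (x+1) := by ring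
        _ ≤ ((x+2*α) * (x+2*α)^(α-1)) * Real.Gamma (x+1) :=
            mul_le_mul_of_nonneg_right this (le_of_lt hG1)
        _ = (x+2*α)^α * Real.Gamma (x+1) := by
            congr 1
            nth_rewrite 1 [← Real.rpow_one (x+2*α)]
            rw [← Real.rpow_add hx2a]
            norm_num
    calc (x + α) * Real.Gamma (x + α) ≤ (x + α) * (Real.Gamma (x+1) * (x+1)^(α-1)) :=
          mul_le_mul_of_nonneg_left h1 (le_of_lt hxa)
      _ ≤ (x+2*α)^α * Real.Gamma (x+1) := h2
  calc (2*α*((k:ℝ)+1)) ^ (-α) * ((x + α) * Real.Gamma (x + α))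
      ≤ (2*α*((k:ℝ)+1)) ^ (-α) * ((x + 2*α) ^ α * Real.Gamma (x + 1)) := by
        apply mul_le_mul_of_nonneg_left hmain (Real.rpow_nonneg (by positivity) _)
    _ = Real.Gamma (x + 1) := by
        have hEq : 2*α*((k:ℝ)+1) = x + 2*α := by rw [hxdef]; ring
        rw [hEq, ← mul_assoc, ← Real.rpow_add hx2a]
        simp

lemma cont_rpow {e : ℝ} (he : 0 < e) : Continuous (fun u : ℝ => u ^ e) := by
  rw [continuous_iff_continuousAt]
  intro x
  exact Real.continuousAt_rpow_const x e (Or.inr he.le)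

lemma beta_lower {α : ℝ} (hα : 1 < α) (hα2 : α ≤ 2) : (2:ℝ)^(1-2*α) < Beta α α := by
  have he : (0:ℝ) < α - 1 := by linarith
  have hcf : Continuous (fun u : ℝ => u ^ (α-1) * (1-u) ^ (α-1)) :=
    (cont_rpow he).mul ((cont_rpow he).comp (continuous_const.sub continuous_id))
  have hcg : Continuous (fun u : ℝ => (4:ℝ)^(1-α) * (4*u*(1-u))) := by continuity
  have hIf : IntegrableOn (fun u : ℝ => u ^ (α-1) * (1-u) ^ (α-1)) (Set.Ioo 0 1) :=
    (hcf.integrableOn_Icc (a := 0) (b := 1)).mono_set Set.Ioo_subset_Icc_self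
  have hIg : IntegrableOn (fun u : ℝ => (4:ℝ)^(1-α) * (4*u*(1-u))) (Set.Ioo 0 1) :=
    (hcg.integrableOn_Icc (a := 0) (b := 1)).mono_set Set.Ioo_subset_Icc_self
  have hmono : ∀ u ∈ Set.Ioo (0:ℝ) 1,
      (4:ℝ)^(1-α) * (4*u*(1-u)) ≤ u ^ (α-1) * (1-u) ^ (α-1) := by
    intro u hu
    obtain ⟨hu0, hu1⟩ := hu
    have h1u : 0 < 1 - u := by linarith
    have ht0 : 0 < 4*u*(1-u) := by positivity
    have ht1 : 4*u*(1-u) ≤ 1 := by nlinarith [sq_nonneg (2*u - 1)]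
    have h1 : u ^ (α-1) * (1-u) ^ (α-1) = (u*(1-u)) ^ (α-1) :=
      (Real.mul_rpow hu0.le h1u.le).symm
    have h2 : (u*(1-u)) ^ (α-1) = (4:ℝ)^(1-α) * (4*u*(1-u)) ^ (α-1) := by
      have : u*(1-u) = (4*u*(1-u)) / 4 := by ring
      rw [this, Real.div_rpow ht0.le (by norm_num), div_eq_mul_inv, mul_comm]
      congr 1
      rw [← Real.rpow_neg_one, ← Real.rpow_mul (by norm_num : (0:ℝ) ≤ 4)]
      congr 1
      ring
    rw [h1, h2]
    have h3 : 4*u*(1-u) ≤ (4*u*(1-u)) ^ (α-1) := by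
      nth_rewrite 1 [← Real.rpow_one (4*u*(1-u))]
      exact Real.rpow_le_rpow_of_exponent_ge ht0 ht1 (by linarith)
    have h4 : (0:ℝ) < (4:ℝ)^(1-α) := Real.rpow_pos_of_pos (by norm_num) _
    exact mul_le_mul_of_nonneg_left h3 h4.le
  have hint : (∫ u in Set.Ioo (0:ℝ) 1, (4:ℝ)^(1-α) * (4*u*(1-u))) ≤ Beta α α := by
    unfold Beta
    exact setIntegral_mono_on hIg hIf measurableSet_Ioo hmono
  have hval : (∫ u in Set.Ioo (0:ℝ) 1, (4:ℝ)^(1-α) * (4*u*(1-u)))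
      = (4:ℝ)^(1-α) * (2/3) := by
    rw [integral_const_mul]
    congr 1
    rw [← integral_Ioc_eq_integral_Ioo, ← intervalIntegral.integral_of_le (by norm_num : (0:ℝ) ≤ 1)]
    have : ∀ x : ℝ, 4*x*(1-x) = 4*x - 4*x^2 := fun x => by ring
    simp_rw [this]
    rw [intervalIntegral.integral_sub ((by continuity : Continuous fun x:ℝ => 4*x).intervalIntegrable 0 1)
      ((by continuity : Continuous fun x:ℝ => 4*x^2).intervalIntegrable 0 1)]
    rw [intervalIntegral.integral_const_mul, intervalIntegral.integral_const_mul,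
      integral_id, integral_pow]
    norm_num
  have h4pow : (4:ℝ)^(1-α) = 2 * (2:ℝ)^(1-2*α) := by
    have h42 : ((2:ℝ)^(2:ℝ)) = 4 := by
      norm_num
    calc (4:ℝ)^(1-α) = ((2:ℝ)^(2:ℝ))^(1-α) := by rw [h42]
      _ = (2:ℝ)^(2*(1-α)) := (Real.rpow_mul (by norm_num) 2 (1-α)).symm
      _ = (2:ℝ)^((1-2*α)+1) := by ring_nf
      _ = 2 * (2:ℝ)^(1-2*α) := by
          rw [Real.rpow_add (by norm_num), Real.rpow_one]; ring
  have hpos : (0:ℝ) < (2:ℝ)^(1-2*α) := Real.rpow_pos_of_pos (by norm_num) _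
  calc (2:ℝ)^(1-2*α) < 2 * (2:ℝ)^(1-2*α) * (2/3) := by nlinarith
    _ = (4:ℝ)^(1-α) * (2/3) := by rw [h4pow]
    _ ≤ Beta α α := hval ▸ hint

set_option maxHeartbeats 1000000 in
lemma sum_lower {α : ℝ} (hα : 1 < α) (hα2 : α ≤ 2) (k : ℕ) (hk : 1 ≤ k) :
    ((k:ℝ)+1)^(2*α-1) * (Beta α α - (2:ℝ)^(1-2*α)) ≤
      ∑ j ∈ Finset.Icc 1 k, (j:ℝ)^(α-1) * (((k:ℝ)+1) - (j:ℝ))^(α-1) := by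
  set c : ℝ := (k:ℝ)+1 with hcdef
  set f : ℝ → ℝ := fun x => x^(α-1) * (c - x)^(α-1) with hfdef
  have he : (0:ℝ) < α - 1 := by linarith
  have hcont : Continuous f :=
    (cont_rpow he).mul ((cont_rpow he).comp (continuous_const.sub continuous_id))
  have hk1 : (1:ℝ) ≤ (k:ℝ) := by exact_mod_cast hk
  have hc2 : (2:ℝ) ≤ c := by rw [hcdef]; linarith
  have hc0 : (0:ℝ) < c := by linarith
  set m : ℕ := (k+1)/2 with hmdef
  have hm1 : 1 ≤ m := by omega
  have hmk : m ≤ k := by omega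
  have h2m : 2*m ≤ k+1 := by omega
  have h2m' : k+1 ≤ 2*m+1 := by omega
  have hmhalf : (m:ℝ) ≤ c/2 := by
    rw [hcdef]
    have : ((2*m : ℕ) : ℝ) ≤ ((k+1 : ℕ) : ℝ) := by exact_mod_cast h2m
    push_cast at this
    linarith
  have hmhalf' : c/2 ≤ (m:ℝ)+1 := by
    rw [hcdef]
    have : ((k+1 : ℕ) : ℝ) ≤ ((2*m+1 : ℕ) : ℝ) := by exact_mod_cast h2m'
    push_cast at this
    linarith
  have hmkR : (m:ℝ)+1 ≤ c := by
    rw [hcdef]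
    have : ((m:ℕ):ℝ) ≤ (k:ℝ) := by exact_mod_cast hmk
    linarith
  -- rewriting f as a rpow of the product
  have hfval : ∀ x : ℝ, 0 ≤ x → x ≤ c → f x = (x*(c-x))^(α-1) := by
    intro x hx0 hxc
    rw [hfdef]
    exact (Real.mul_rpow hx0 (by linarith)).symm
  -- monotone part
  have hmono : MonotoneOn f (Set.Icc ((0:ℕ):ℝ) ((m:ℕ):ℝ)) := by
    intro x hx y hy hxy
    simp only [Nat.cast_zero, Set.mem_Icc] at hx hy
    have hxc : x ≤ c := by linarith [hx.2, hmhalf, hc0]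
    have hyc : y ≤ c := by linarith [hy.2, hmhalf, hc0]
    rw [hfval x hx.1 hxc, hfval y hy.1 hyc]
    apply Real.rpow_le_rpow (mul_nonneg hx.1 (by linarith)) _ he.le
    nlinarith [mul_nonneg (sub_nonneg.2 hxy) (by linarith [hx.2, hy.2, hmhalf] : (0:ℝ) ≤ c - x - y)]
  -- antitone part
  have hanti : AntitoneOn f (Set.Icc (((m+1):ℕ):ℝ) (((k+1):ℕ):ℝ)) := by
    intro x hx y hy hxy
    simp only [Set.mem_Icc] at hx hy
    have hckk : (((k+1):ℕ):ℝ) = c := by rw [hcdef]; push_cast; ring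
    have hmx : (m:ℝ)+1 ≤ x := by
      have := hx.1; push_cast at this; linarith
    have hmy : (m:ℝ)+1 ≤ y := by
      have := hy.1; push_cast at this; linarith
    have hxc : x ≤ c := by rw [← hckk]; exact hx.2
    have hyc : y ≤ c := by rw [← hckk]; exact hy.2
    have hx0 : 0 ≤ x := by linarith
    have hy0 : 0 ≤ y := by linarith
    rw [hfval x hx0 hxc, hfval y hy0 hyc]
    apply Real.rpow_le_rpow (mul_nonneg hy0 (by linarith)) _ he.le
    nlinarith [mul_nonneg (sub_nonneg.2 hxy) (by linarith [hmhalf'] : (0:ℝ) ≤ x + y - c)]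
  have hintgr : ∀ a b : ℝ, IntervalIntegrable f volume a b :=
    fun a b => hcont.intervalIntegrable a b
  -- the two sum-integral comparisons
  have hA := hmono.integral_le_sum_Ico (Nat.zero_le m)
  have hB := hanti.integral_le_sum_Ico (by omega : m+1 ≤ k+1)
  simp only [Nat.cast_zero] at hA
  -- sum splitting
  have hsum : (∑ j ∈ Finset.Icc 1 k, f (j:ℝ)) =
      (∑ i ∈ Finset.Ico 0 m, f ((i+1 : ℕ):ℝ)) + ∑ i ∈ Finset.Ico (m+1) (k+1), f ((i:ℕ):ℝ) := by
    have h1 : Finset.Icc 1 k = Finset.Ico 1 (k+1) := by rw [Finset.Ico_add_one_right_eq_Icc]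
    rw [h1, ← Finset.sum_Ico_consecutive _ (by omega : 1 ≤ m+1) (by omega : m+1 ≤ k+1)]
    congr 1
    rw [Finset.sum_Ico_eq_sum_range, Nat.Ico_zero_eq_range]
    simp only [Nat.add_sub_cancel]
    apply Finset.sum_congr rfl
    intro i _
    congr 1
    push_cast
    ring
  -- splitting the integral
  have hsplit : (∫ x in (0:ℝ)..c, f x) =
      (∫ x in (0:ℝ)..(m:ℝ), f x) + (∫ x in (m:ℝ)..((m:ℝ)+1), f x)
        + ∫ x in ((m:ℝ)+1)..c, f x := by
    rw [intervalIntegral.integral_add_adjacent_intervals (hintgr _ _) (hintgr _ _),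
      intervalIntegral.integral_add_adjacent_intervals (hintgr _ _) (hintgr _ _)]
  -- middle integral bound
  have hmid : (∫ x in (m:ℝ)..((m:ℝ)+1), f x) ≤ c^(2*α-2) * (2:ℝ)^(2-2*α) := by
    have hconst : (c^2/4)^(α-1) = c^(2*α-2) * (2:ℝ)^(2-2*α) := by
      have h1 : c^2/4 = c^(2:ℕ) * (1/4 : ℝ) := by ring
      rw [h1, Real.mul_rpow (by positivity) (by norm_num), ← Real.rpow_natCast c 2,
        ← Real.rpow_mul hc0.le]
      have h2 : ((1:ℝ)/4) = (2:ℝ)^(-2:ℝ) := by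
        rw [Real.rpow_neg (by norm_num)]
        norm_num
      rw [h2, ← Real.rpow_mul (by norm_num : (0:ℝ) ≤ 2)]
      push_cast
      rw [show (2:ℝ)*(α-1) = 2*α-2 from by ring, show (-2:ℝ)*(α-1) = 2-2*α from by ring]
    have hpt : ∀ x ∈ Set.Icc (m:ℝ) ((m:ℝ)+1), f x ≤ c^(2*α-2) * (2:ℝ)^(2-2*α) := by
      intro x hx
      obtain ⟨hx1, hx2⟩ := hx
      have hx0 : 0 ≤ x := le_trans (by positivity) hx1
      have hxc : x ≤ c := by linarith
      rw [hfval x hx0 hxc, ← hconst]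
      apply Real.rpow_le_rpow (mul_nonneg hx0 (by linarith)) _ he.le
      nlinarith [sq_nonneg (c - 2*x)]
    calc (∫ x in (m:ℝ)..((m:ℝ)+1), f x)
        ≤ ∫ _x in (m:ℝ)..((m:ℝ)+1), (c^(2*α-2) * (2:ℝ)^(2-2*α)) :=
          intervalIntegral.integral_mono_on (by linarith) (hintgr _ _)
            intervalIntegrable_const hpt
      _ = c^(2*α-2) * (2:ℝ)^(2-2*α) := by simp
  -- value of the whole integral
  have hwhole : (∫ x in (0:ℝ)..c, f x) = c^(2*α-1) * Beta α α := by
    have hsub : c • (∫ u in (0:ℝ)..(1:ℝ), f (c*u)) = ∫ x in (0:ℝ)..c, f x := by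
      have := intervalIntegral.smul_integral_comp_mul_left (a := (0:ℝ)) (b := 1) f c
      simpa using this
    have hcongr : (∫ u in (0:ℝ)..(1:ℝ), f (c*u)) =
        ∫ u in (0:ℝ)..(1:ℝ), c^(2*α-2) * (u^(α-1)*(1-u)^(α-1)) := by
      apply intervalIntegral.integral_congr
      intro u hu
      rw [Set.uIcc_of_le (by norm_num : (0:ℝ) ≤ 1), Set.mem_Icc] at hu
      obtain ⟨hu0, hu1⟩ := hu
      show f (c*u) = _
      rw [hfdef]
      simp only
      have h2 : c - c*u = c*(1-u) := by ring
      rw [h2, Real.mul_rpow hc0.le hu0, Real.mul_rpow hc0.le (by linarith)]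
      rw [show c^(α-1) * u^(α-1) * (c^(α-1) * (1-u)^(α-1))
          = (c^(α-1) * c^(α-1)) * (u^(α-1)*(1-u)^(α-1)) from by ring,
        ← Real.rpow_add hc0]
      ring_nf
    have hbeta : (∫ u in (0:ℝ)..(1:ℝ), u^(α-1)*(1-u)^(α-1)) = Beta α α := by
      rw [intervalIntegral.integral_of_le (by norm_num : (0:ℝ) ≤ 1),
        integral_Ioc_eq_integral_Ioo]
      rfl
    rw [← hsub, hcongr, intervalIntegral.integral_const_mul, hbeta, smul_eq_mul, ← mul_assoc]
    congr 1
    nth_rewrite 1 [show c = c^(1:ℝ) from (Real.rpow_one c).symm]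
    rw [← Real.rpow_add hc0]
    ring_nf
  -- the power comparison for the middle piece
  have hpowcmp : c^(2*α-2) * (2:ℝ)^(2-2*α) ≤ c^(2*α-1) * (2:ℝ)^(1-2*α) := by
    have h1 : (2:ℝ)^(2-2*α) = 2 * (2:ℝ)^(1-2*α) := by
      rw [show (2-2*α : ℝ) = (1-2*α)+1 from by ring, Real.rpow_add (by norm_num),
        Real.rpow_one]
      ring
    have h2 : c^(2*α-1) = c * c^(2*α-2) := by
      rw [show (2*α-1 : ℝ) = (2*α-2)+1 from by ring, Real.rpow_add hc0, Real.rpow_one]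
      ring
    rw [h1, h2]
    have hp1 : (0:ℝ) ≤ c^(2*α-2) := (Real.rpow_pos_of_pos hc0 _).le
    have hp2 : (0:ℝ) ≤ (2:ℝ)^(1-2*α) := (Real.rpow_pos_of_pos (by norm_num) _).le
    calc c^(2*α-2) * (2 * (2:ℝ)^(1-2*α)) = 2 * (c^(2*α-2) * (2:ℝ)^(1-2*α)) := by ring
      _ ≤ c * (c^(2*α-2) * (2:ℝ)^(1-2*α)) :=
          mul_le_mul_of_nonneg_right hc2 (mul_nonneg hp1 hp2)
      _ = c * c^(2*α-2) * (2:ℝ)^(1-2*α) := by ring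
  -- put everything together
  have hfinal : (∑ j ∈ Finset.Icc 1 k, f (j:ℝ)) ≥ c^(2*α-1) * (Beta α α - (2:ℝ)^(1-2*α)) := by
    have hckk : (((k+1):ℕ):ℝ) = c := by rw [hcdef]; push_cast; ring
    rw [hckk] at hB
    have hmm : ((m:ℕ):ℝ)+1 = (((m+1):ℕ):ℝ) := by push_cast; ring
    calc (∑ j ∈ Finset.Icc 1 k, f (j:ℝ))
        = (∑ i ∈ Finset.Ico 0 m, f ((i+1 : ℕ):ℝ)) + ∑ i ∈ Finset.Ico (m+1) (k+1), f ((i:ℕ):ℝ) :=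
          hsum
      _ ≥ (∫ x in (0:ℝ)..(m:ℝ), f x) + ∫ x in ((m:ℝ)+1)..c, f x := by
          apply add_le_add hA
          rw [hmm]
          exact hB
      _ = (∫ x in (0:ℝ)..c, f x) - ∫ x in (m:ℝ)..((m:ℝ)+1), f x := by
          rw [hsplit]; ring
      _ ≥ c^(2*α-1) * Beta α α - c^(2*α-1) * (2:ℝ)^(1-2*α) := by
          rw [hwhole]
          have := le_trans hmid hpowcmp
          linarith
      _ = c^(2*α-1) * (Beta α α - (2:ℝ)^(1-2*α)) := by ring
  calc ((k:ℝ)+1)^(2*α-1) * (Beta α α - (2:ℝ)^(1-2*α))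
      = c^(2*α-1) * (Beta α α - (2:ℝ)^(1-2*α)) := by rw [hcdef]
    _ ≤ ∑ j ∈ Finset.Icc 1 k, f (j:ℝ) := hfinal
    _ = ∑ j ∈ Finset.Icc 1 k, (j:ℝ)^(α-1) * (((k:ℝ)+1) - (j:ℝ))^(α-1) := by
        apply Finset.sum_congr rfl
        intro j _
        rw [hfdef, hcdef]

theorem stmt_15 (α : ℝ) (hα : 1 < α) (hα2 : α ≤ 2)
    (lam nu : ℝ) (hlam : 0 < lam) (hnu : 0 < nu)
    (b : ℕ → ℝ) (hb : IsOddRiccatiSeq α lam nu b)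
    (Btld ρ c : ℝ)
    (hB : Btld = Beta α α - (2:ℝ) ^ (1 - 2*α))
    (hρ : ρ = lam * nu * (2*α) ^ (-α) * Btld / Real.Gamma (α + 1))
    (hc : c = (2*α) ^ α / (lam * Btld)) :
    ∀ k : ℕ, 1 ≤ k → c * ρ ^ k * (k:ℝ) ^ (α - 1) ≤ b k := by
  obtain ⟨hb1, hbrec⟩ := hb
  have hGpos : 0 < Real.Gamma (α+1) := Real.Gamma_pos_of_pos (by linarith)
  have hBt : 0 < Btld := by rw [hB]; linarith [beta_lower hα hα2]
  have h2α : (0:ℝ) < 2*α := by linarith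
  have hρpos : 0 < ρ := by
    rw [hρ]
    have : (0:ℝ) < (2*α)^(-α) := Real.rpow_pos_of_pos h2α _
    positivity
  have hcpos : 0 < c := by
    rw [hc]
    have : (0:ℝ) < (2*α)^α := Real.rpow_pos_of_pos h2α _
    positivity
  have h2a1 : (2*α:ℝ)^α * (2*α)^(-α) = 1 := by
    rw [← Real.rpow_add h2α]; simp
  have hne : lam * Btld ≠ 0 := by positivity
  have hcρ : c * ρ = nu / Real.Gamma (α+1) := by
    have h0 : c * ρ = (nu/Real.Gamma (α+1)) * ((2*α)^α*(2*α)^(-α))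
        * ((lam*Btld)/(lam*Btld)) := by
      rw [hc, hρ]; ring
    rw [h0, h2a1, div_self hne, mul_one, mul_one]
  intro k
  induction k using Nat.strong_induction_on with
  | _ k ih =>
    intro hk
    match k, hk with
    | 1, _ =>
      rw [hb1, pow_one, Nat.cast_one, Real.one_rpow, mul_one]
      exact le_of_eq hcρ
    | (n+2), _ =>
      have hK : 1 ≤ n+1 := by omega
      have hrec := hbrec (n+1) hK
      set K : ℕ := n+1 with hKdef
      set y : ℝ := (K:ℝ)+1 with hydef
      have hy0 : (0:ℝ) < y := by positivity
      -- lower bound each term of the sum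
      have hterm : ∀ j ∈ Finset.Icc 1 K,
          c^2 * ρ^(K+1) * ((j:ℝ)^(α-1) * (y - (j:ℝ))^(α-1)) ≤ b j * b (K+1-j) := by
        intro j hj
        rw [Finset.mem_Icc] at hj
        obtain ⟨hj1, hjK⟩ := hj
        have hj2 : 1 ≤ K+1-j := by omega
        have h1 := ih j (by omega) hj1
        have h2 := ih (K+1-j) (by omega) hj2
        have hl1 : (0:ℝ) ≤ c * ρ^j * (j:ℝ)^(α-1) := by
          have := Real.rpow_nonneg (Nat.cast_nonneg j) (α-1)
          positivity
        have hl2 : (0:ℝ) ≤ c * ρ^(K+1-j) * ((K+1-j : ℕ):ℝ)^(α-1) := by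
          have := Real.rpow_nonneg (Nat.cast_nonneg (K+1-j)) (α-1)
          positivity
        have hprod := mul_le_mul h1 h2 hl2 (le_trans hl1 h1)
        have hcast : ((K+1-j : ℕ):ℝ) = y - (j:ℝ) := by
          rw [hydef]
          have : ((K+1-j : ℕ):ℝ) = ((K+1 : ℕ):ℝ) - (j:ℝ) := by
            rw [Nat.cast_sub (by omega)]
          rw [this]; push_cast; ring
        calc c^2 * ρ^(K+1) * ((j:ℝ)^(α-1) * (y - (j:ℝ))^(α-1))
            = (c * ρ^j * (j:ℝ)^(α-1)) * (c * ρ^(K+1-j) * ((K+1-j : ℕ):ℝ)^(α-1)) := by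
              have hpow : ρ^(K+1) = ρ^j * ρ^(K+1-j) := by
                rw [← pow_add]
                congr 1
                omega
              rw [hcast, hpow]
              ring
          _ ≤ b j * b (K+1-j) := hprod
      have hS : c^2 * ρ^(K+1) * (∑ j ∈ Finset.Icc 1 K, (j:ℝ)^(α-1) * (y - (j:ℝ))^(α-1))
          ≤ ∑ j ∈ Finset.Icc 1 K, b j * b (K+1-j) := by
        rw [Finset.mul_sum]
        exact Finset.sum_le_sum hterm
      have hT := sum_lower hα hα2 K hK
      have hG := gamma_ratio hα.le hα2 K hK
      set G : ℝ := Real.Gamma (2*α*(K:ℝ) + 1) / Real.Gamma ((2*(K:ℝ)+1)*α + 1) with hGdef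
      have hGpos' : 0 < G := by
        rw [hGdef]
        apply div_pos (Real.Gamma_pos_of_pos (by positivity))
        apply Real.Gamma_pos_of_pos
        have : (0:ℝ) ≤ (K:ℝ) := Nat.cast_nonneg K
        nlinarith
      have hG0pos : (0:ℝ) < (2*α*y)^(-α) := Real.rpow_pos_of_pos (by positivity) _
      have hTnn : (0:ℝ) ≤ ∑ j ∈ Finset.Icc 1 K, (j:ℝ)^(α-1) * (y - (j:ℝ))^(α-1) := by
        apply Finset.sum_nonneg
        intro j hj
        rw [Finset.mem_Icc] at hj
        have hjy : (0:ℝ) ≤ y - (j:ℝ) := by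
          rw [hydef]
          have : (j:ℝ) ≤ (K:ℝ) := by exact_mod_cast hj.2
          linarith
        exact mul_nonneg (Real.rpow_nonneg (Nat.cast_nonneg j) _) (Real.rpow_nonneg hjy _)
      -- key algebraic identity
      have hkey : lam * (2*α*y)^(-α) * c * (y^(2*α-1) * Btld) = y^(α-1) := by
        have e1 : (2*α*y)^(-α) = (2*α)^(-α) * y^(-α) := Real.mul_rpow h2α.le hy0.le
        have e3 : y^(-α) * y^(2*α-1) = y^(α-1) := by
          rw [← Real.rpow_add hy0]; ring_nf
        have hlamc : lam * c * Btld = (2*α)^α := by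
          rw [hc]; field_simp
        calc lam * (2*α*y)^(-α) * c * (y^(2*α-1) * Btld)
            = (lam * c * Btld) * (2*α)^(-α) * (y^(-α) * y^(2*α-1)) := by rw [e1]; ring
          _ = ((2*α)^α * (2*α)^(-α)) * (y^(-α) * y^(2*α-1)) := by rw [hlamc]
          _ = y^(α-1) := by rw [h2a1, e3, one_mul]
      -- chain of inequalities
      have hchain : c * ρ^(K+1) * y^(α-1) ≤ b (K+1) := by
        rw [hrec]
        calc c * ρ^(K+1) * y^(α-1)
            = lam * (2*α*y)^(-α) * (c^2 * ρ^(K+1) * (y^(2*α-1) * Btld)) := by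
              rw [show lam * (2*α*y)^(-α) * (c^2 * ρ^(K+1) * (y^(2*α-1) * Btld))
                  = (c * ρ^(K+1)) * (lam * (2*α*y)^(-α) * c * (y^(2*α-1) * Btld)) from by ring,
                hkey]
          _ ≤ lam * (2*α*y)^(-α) * (c^2 * ρ^(K+1)
                * (∑ j ∈ Finset.Icc 1 K, (j:ℝ)^(α-1) * (y - (j:ℝ))^(α-1))) := by
              apply mul_le_mul_of_nonneg_left _ (by positivity)
              apply mul_le_mul_of_nonneg_left _ (by positivity)
              rw [← hB] at hT
              exact hT
          _ ≤ lam * G * (c^2 * ρ^(K+1)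
                * (∑ j ∈ Finset.Icc 1 K, (j:ℝ)^(α-1) * (y - (j:ℝ))^(α-1))) := by
              apply mul_le_mul_of_nonneg_right _ (by positivity)
              exact mul_le_mul_of_nonneg_left hG hlam.le
          _ ≤ lam * G * ∑ j ∈ Finset.Icc 1 K, b j * b (K+1-j) := by
              apply mul_le_mul_of_nonneg_left hS (by positivity)
      have : ((n+2 : ℕ):ℝ) = y := by rw [hydef, hKdef]; push_cast; ring
      rw [this]
      rw [show (n+2 : ℕ) = K+1 from by rw [hKdef]]
      exact hchain
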